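/- If a frame (f_n) with analysis operator U possesses a Parseval dual, then dim(Im(U*U − I)) ≤ dim(Ker U*), i.e. the dimension of the range of U*U − I is at most the excess of the frame. -/

import Mathlib

open scoped InnerProductSpace

universe u

noncomputable section

abbrev ell2 : Type := lp (fun _ : ℕ => ℂ) 2

def IsFrame {H : Type*} [NormedAddCommGroup H] [InnerProductSpace ℂ H]
    (f : ℕ → H) : Prop :=
  ∃ A B : ℝ, 0 < A ∧ 0 < B ∧ ∀ x : H,
    A * ‖x‖ ^ 2 ≤ ∑' n, ‖⟪x, f n⟫_ℂ‖ ^ 2 ∧ ∑' n, ‖⟪x, f n⟫_ℂ‖ ^ 2 ≤ B * ‖x‖ ^ 2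

def IsAnalysisOp {H : Type*} [NormedAddCommGroup H] [InnerProductSpace ℂ H]
    (f : ℕ → H) (U : H →L[ℂ] ell2) : Prop :=
  ∀ (x : H) (n : ℕ), (U x : ∀ _ : ℕ, ℂ) n = ⟪x, f n⟫_ℂ

/-!
Since `V†U = 1`, the operator `UV†` is a (non-orthogonal) projection onto `range U` along
`ker V†`, so `ker V†` and `ker U† = (range U)ᗮ` are two complements of the same closed subspace
and have the same dimension. On the other hand `U†V = (V†U)† = 1` gives `U†U - 1 = U†(U - V)`,
and `V†(U - V) = 1 - 1 = 0` puts `range (U - V)` inside `ker V†`.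
-/

open ContinuousLinearMap

theorem Submodule.rank_eq_of_isCompl_of_isCompl {R M : Type*} [Ring R] [AddCommGroup M]
    [Module R M] {p q r : Submodule R M} (hq : IsCompl p q) (hr : IsCompl p r) :
    Module.rank R q = Module.rank R r :=
  ((p.quotientEquivOfIsCompl q hq).symm ≪≫ₗ p.quotientEquivOfIsCompl r hr).rank_eq

section Adjoint

variable {𝕜 E F : Type*} [RCLike 𝕜] [NormedAddCommGroup E] [InnerProductSpace 𝕜 E]
  [CompleteSpace E] [NormedAddCommGroup F] [InnerProductSpace 𝕜 F] [CompleteSpace F]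

theorem ContinuousLinearMap.rank_ker_adjoint_eq_of_adjoint_comp_eq_id {U V : E →L[𝕜] F}
    (h : adjoint V ∘L U = .id 𝕜 E) :
    Module.rank 𝕜 (adjoint V).ker = Module.rank 𝕜 (adjoint U).ker := by
  have hcompl := U.isTopCompl_range_ker_of_leftInverse (adjoint V) fun x => congr($h x)
  have : CompleteSpace U.range := hcompl.isClosed.completeSpace_coe
  rw [← U.orthogonal_range]
  exact Submodule.rank_eq_of_isCompl_of_isCompl hcompl.isCompl U.range.isCompl_orthogonal

theorem ContinuousLinearMap.adjoint_comp_self_sub_id_eq {U V : E →L[𝕜] F}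
    (h : adjoint V ∘L U = .id 𝕜 E) :
    adjoint U ∘L U - .id 𝕜 E = adjoint U ∘L (U - V) := by
  have hUV : adjoint U ∘L V = .id 𝕜 E := by
    simpa only [adjoint_comp, adjoint_adjoint, adjoint_id] using congr(adjoint $h)
  rw [comp_sub, hUV]

end Adjoint

theorem rank_le_excess_of_parseval_dual_general
    {H : Type u} [NormedAddCommGroup H] [InnerProductSpace ℂ H] [CompleteSpace H]
    (U : H →L[ℂ] ell2) (V : H →L[ℂ] ell2)
    (hdual : (ContinuousLinearMap.adjoint V) ∘L U = ContinuousLinearMap.id ℂ H)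
    (hParseval : (ContinuousLinearMap.adjoint V) ∘L V = ContinuousLinearMap.id ℂ H) :
    Cardinal.lift.{0} (Module.rank ℂ (LinearMap.range
        ((ContinuousLinearMap.adjoint U) ∘L U - ContinuousLinearMap.id ℂ H).toLinearMap)) ≤
      Cardinal.lift.{u} (Module.rank ℂ (LinearMap.ker (ContinuousLinearMap.adjoint U).toLinearMap)) := by
  have hrange : (U - V).range ≤ (adjoint V).ker := LinearMap.range_le_ker_iff.mpr <| by
    rw [← toLinearMap_comp, comp_sub, hdual, hParseval, sub_self, toLinearMap_zero]
  calc Cardinal.lift.{0} (Module.rank ℂ (adjoint U ∘L U - .id ℂ H).range)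
      = Cardinal.lift.{0} (adjoint U ∘ₗ (U - V).toLinearMap).rank := by
        rw [adjoint_comp_self_sub_id_eq hdual]; rfl
    _ ≤ Cardinal.lift.{u} (U - V).toLinearMap.rank := LinearMap.lift_rank_comp_le_right _ _
    _ ≤ Cardinal.lift.{u} (Module.rank ℂ (adjoint V).ker) :=
        Cardinal.lift_le.mpr (Submodule.rank_mono hrange)
    _ = Cardinal.lift.{u} (Module.rank ℂ (adjoint U).ker) := by
        rw [rank_ker_adjoint_eq_of_adjoint_comp_eq_id hdual]

/-- If a frame possesses a Parseval dual, then `dim Im(U*U - I) ≤` the excess. -/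
theorem rank_le_excess_of_parseval_dual
    {H : Type u} [NormedAddCommGroup H] [InnerProductSpace ℂ H] [CompleteSpace H]
    (f : ℕ → H) (hf : IsFrame f)
    (U : H →L[ℂ] ell2) (hU : IsAnalysisOp f U)
    (g : ℕ → H) (V : H →L[ℂ] ell2) (hV : IsAnalysisOp g V)
    (hdual : (ContinuousLinearMap.adjoint V) ∘L U = ContinuousLinearMap.id ℂ H)
    (hParseval : (ContinuousLinearMap.adjoint V) ∘L V = ContinuousLinearMap.id ℂ H) :
    Cardinal.lift.{0} (Module.rank ℂ (LinearMap.range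
        ((ContinuousLinearMap.adjoint U) ∘L U - ContinuousLinearMap.id ℂ H).toLinearMap)) ≤
      Cardinal.lift.{u} (Module.rank ℂ (LinearMap.ker (ContinuousLinearMap.adjoint U).toLinearMap)) :=
  rank_le_excess_of_parseval_dual_general U V hdual hParseval
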